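/- arXiv:1401.5142 — 3 statements merged into one kernel-verified Lean document; each statement's English description precedes it below -/
import Mathlib

section
/- A nilpotent group G whose abelianization is p-radicable is itself p-radicable. -/
/-! Induction on the nilpotency class, the abelian case being trivial. If `γ_{c+1}(G) = 1` with
`c ≥ 1` (indexing from `γ_0(G) = G`), then `N = γ_c(G) = [γ_{c-1}(G), G]` is central and `G/N`
has smaller class, with abelianization a quotient of that of `G`; so `G/N` is `p`-radicable.
Thus every `b ∈ G` is `x^p c` with `c ∈ N` central, and for `a ∈ γ_{c-1}(G)` bilinearity of
central commutators gives `[a, b] = [a, x]^p`. The generators of the abelian group `N` are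
therefore `p`-th powers of elements of `N`, so `N` is `p`-radicable, and a central extension of a
`p`-radicable group by a `p`-radicable group is `p`-radicable. -/

def IsPRadicable (G : Type*) [Group G] (p : ℕ) : Prop :=
  ∀ g : G, ∃ h : G, h ^ p = g

open Subgroup
open scoped commutatorElement

section Commutator

variable {G : Type*} [Group G]

theorem commutatorElement_mul_right_of_mem_center (a b : G) {c : G} (hc : c ∈ center G) :
    ⁅a, b * c⁆ = ⁅a, b⁆ := by
  rw [commutatorElement_mul_right_eq_mul_conj,
    commutatorElement_eq_one_iff_mul_comm.mpr (mem_center_iff.mp hc a)]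
  group

theorem commutatorElement_pow_right_of_mem_center (a u : G) (h : ⁅a, u⁆ ∈ center G) (k : ℕ) :
    ⁅a, u ^ k⁆ = ⁅a, u⁆ ^ k := by
  induction k with
  | zero => simp
  | succ k ih =>
    rw [pow_succ, commutatorElement_mul_right_eq_mul_conj, ih, mul_assoc _ (u ^ k),
      mem_center_iff.mp h (u ^ k), ← mul_assoc, mul_inv_cancel_right, pow_succ]

end Commutator

theorem Abelianization.map_surjective {G H : Type*} [Group G] [Group H] {f : G →* H}
    (hf : Function.Surjective f) : Function.Surjective (Abelianization.map f) := by
  intro y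
  obtain ⟨y, rfl⟩ := QuotientGroup.mk_surjective y
  obtain ⟨x, rfl⟩ := hf y
  exact ⟨Abelianization.of x, Abelianization.map_of f x⟩

theorem Subgroup.lowerCentralSeries_quotient_lowerCentralSeries_eq_bot {G : Type*} [Group G]
    (n : ℕ) :
    (⊤ : Subgroup (G ⧸ (⊤ : Subgroup G).lowerCentralSeries n)).lowerCentralSeries n = ⊥ := by
  rw [← map_top_of_surjective _ (QuotientGroup.mk'_surjective _), ← map_lowerCentralSeries,
    map_eq_bot_iff, QuotientGroup.ker_mk']

namespace IsPRadicable

variable {G : Type*} [Group G] {p : ℕ}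

theorem of_surjective {H : Type*} [Group H] {f : G →* H} (hf : Function.Surjective f)
    (h : IsPRadicable G p) : IsPRadicable H p := by
  intro y
  obtain ⟨x, rfl⟩ := hf y
  obtain ⟨r, rfl⟩ := h x
  exact ⟨f r, (map_pow f r p).symm⟩

theorem exists_inv_pow_mul_mem {N : Subgroup G} [N.Normal] (h : IsPRadicable (G ⧸ N) p)
    (g : G) : ∃ x : G, (x ^ p)⁻¹ * g ∈ N := by
  obtain ⟨r, hr⟩ := h g
  obtain ⟨x, rfl⟩ := QuotientGroup.mk_surjective r
  exact ⟨x, QuotientGroup.eq.mp hr⟩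

theorem of_quotient_of_le_center {N : Subgroup G} [N.Normal] (hN : N ≤ center G)
    (hNp : IsPRadicable N p) (hQ : IsPRadicable (G ⧸ N) p) : IsPRadicable G p := by
  intro g
  obtain ⟨x, hx⟩ := hQ.exists_inv_pow_mul_mem g
  obtain ⟨w, hw⟩ := hNp ⟨_, hx⟩
  have hw_comm : Commute x w := mem_center_iff.mp (hN w.2) x
  refine ⟨x * w, ?_⟩
  rw [hw_comm.mul_pow, ← coe_pow, hw, mul_inv_cancel_left]

theorem closure_of_le_center {S : Set G} (hS : closure S ≤ center G)
    (hroots : ∀ s ∈ S, ∃ w ∈ closure S, w ^ p = s) : IsPRadicable (closure S) p := by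
  suffices ∀ z ∈ closure S, ∃ w ∈ closure S, w ^ p = z by
    rintro ⟨z, hz⟩
    obtain ⟨w, hw, rfl⟩ := this z hz
    exact ⟨⟨w, hw⟩, rfl⟩
  intro z hz
  induction hz using closure_induction with
  | mem s hs => exact hroots s hs
  | one => exact ⟨1, one_mem _, one_pow p⟩
  | mul x y _ _ hx hy =>
    obtain ⟨v, hv, rfl⟩ := hx
    obtain ⟨w, hw, rfl⟩ := hy
    exact ⟨v * w, mul_mem hv hw, Commute.mul_pow (mem_center_iff.mp (hS hw) v) p⟩
  | inv x _ hx =>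
    obtain ⟨w, hw, rfl⟩ := hx
    exact ⟨w⁻¹, inv_mem hw, inv_pow w p⟩

theorem commutator_top_of_le_center {H : Subgroup G} [H.Normal] (hc : ⁅H, ⊤⁆ ≤ center G)
    (hQ : IsPRadicable (G ⧸ ⁅H, (⊤ : Subgroup G)⁆) p) :
    IsPRadicable ↥⁅H, (⊤ : Subgroup G)⁆ p := by
  have hroots : ∀ a ∈ H, ∀ b : G, ∃ w ∈ ⁅H, (⊤ : Subgroup G)⁆, w ^ p = ⁅a, b⁆ := by
    intro a ha b
    obtain ⟨x, hx⟩ := hQ.exists_inv_pow_mul_mem b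
    have hax : ⁅a, x⁆ ∈ ⁅H, (⊤ : Subgroup G)⁆ := commutator_mem_commutator ha (mem_top x)
    refine ⟨⁅a, x⁆, hax, ?_⟩
    rw [← mul_inv_cancel_left (x ^ p) b, commutatorElement_mul_right_of_mem_center _ _ (hc hx),
      commutatorElement_pow_right_of_mem_center _ _ (hc hax)]
  rw [Subgroup.commutator_def] at hc hroots ⊢
  exact closure_of_le_center hc fun _ ⟨a, ha, b, _, hab⟩ ↦ hab ▸ hroots a ha b

theorem of_lowerCentralSeries_succ_eq_bot (n : ℕ) {G : Type*} [Group G]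
    (hG : (⊤ : Subgroup G).lowerCentralSeries (n + 1) = ⊥)
    (h : IsPRadicable (Abelianization G) p) : IsPRadicable G p := by
  induction n generalizing G with
  | zero =>
    have hbot : commutator G = ⊥ := hG
    refine of_quotient_of_le_center (N := commutator G) (by simp [hbot]) ?_ h
    rintro ⟨z, hz⟩
    rw [hbot, mem_bot] at hz
    subst hz
    exact ⟨1, one_pow p⟩
  | succ n ih =>
    have hcentral : (⊤ : Subgroup G).lowerCentralSeries (n + 1) ≤ center G :=
      commutator_top_right_eq_bot_iff_le_center.mp hG
    have hQ : IsPRadicable (G ⧸ (⊤ : Subgroup G).lowerCentralSeries (n + 1)) p :=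
      ih (lowerCentralSeries_quotient_lowerCentralSeries_eq_bot _)
        (h.of_surjective (Abelianization.map_surjective (QuotientGroup.mk'_surjective _)))
    exact of_quotient_of_le_center hcentral (commutator_top_of_le_center hcentral hQ) hQ

end IsPRadicable

theorem stmt3_general (G : Type*) [Group G] [Group.IsNilpotent G] (p : ℕ)
    (h : IsPRadicable (Abelianization G) p) : IsPRadicable G p :=
  h.of_lowerCentralSeries_succ_eq_bot _
    (Subgroup.lowerCentralSeries_eq_bot_iff_nilpotencyClass_le.mpr (Nat.le_succ _))

/-- A nilpotent group whose abelianization is `p`-radicable is itself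
`p`-radicable. -/
theorem stmt3 (G : Type*) [Group G] [Group.IsNilpotent G] (p : ℕ) (hp : p.Prime)
    (h : IsPRadicable (Abelianization G) p) : IsPRadicable G p :=
  stmt3_general G p h
end

section
/- Let Γ be a nilpotent group of finite Hirsch rank such that some finite-index subgroup has p-radicable abelianization. Then every homomorphism from that finite-index subgroup into the maximal compact subgroup E of a ℚ_p-torus C(ℚ_p) has finite image. -/
open Matrix

/-- `G` admits a subnormal series of length `n` with infinite cyclic factors. -/
def IsPolyZ (G : Type*) [Group G] (n : ℕ) : Prop :=
  ∃ c : Fin (n + 1) → Subgroup G, Monotone c ∧ c 0 = ⊥ ∧ c (Fin.last n) = ⊤ ∧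
    ∀ i : Fin n, ∃ f : (c i.succ) →* Multiplicative ℤ,
      Function.Surjective f ∧ f.ker = (c i.castSucc).subgroupOf (c i.succ)

/-- The Hirsch rank of a group. -/
noncomputable def hirschRank (G : Type*) [Group G] : ℕ∞ :=
  ⨆ (H : Subgroup G) (_ : H.FG), sSup {m : ℕ∞ | ∃ l : ℕ, m = l ∧ IsPolyZ H l}

/-- Extension of scalars from `GL n ℚ_p` to the algebraic closure of `ℚ_p`. -/
noncomputable def glMapAC (p : ℕ) [Fact p.Prime] {n : ℕ} :
    GL (Fin n) ℚ_[p] →* GL (Fin n) (AlgebraicClosure ℚ_[p]) :=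
  Units.map (RingHom.toMonoidHom
    (RingHom.mapMatrix (algebraMap ℚ_[p] (AlgebraicClosure ℚ_[p]))))

/-!
Inside `GL_n(ℚ_p)` the congruence subgroups `U_k = {g | g ≡ 1 mod p^(k+1)}` satisfy `U_k ^ p ⊆ U_(k+1)`
and `⋂ U_k = 1`, and `U_0` is open, hence of finite index in the compact group `E`. The image `K`
of `H` is abelian (it lies in the torus) and `p`-radicable (it is a quotient of `H^ab`). With
`m = [K : K ∩ U_0]`, every `a ∈ K` is `c ^ p ^ k` for some `c ∈ K`, so `a ^ m = (c ^ m) ^ p ^ k ∈ U_k`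
for all `k`, whence `a ^ m = 1`; radicability then makes the exponent of `K` prime to `p`. An
element of `U_0` of order prime to `p` is a power of its own `p ^ k`-th power, so it lies in every
`U_k` and is trivial. Hence `K ∩ U_0 = 1` and `K` is finite.
-/

theorem IsPRadicable.of_surjective_s17 {G G' : Type*} [Group G] [Group G'] {p : ℕ}
    (h : IsPRadicable G p) {f : G →* G'} (hf : Function.Surjective f) : IsPRadicable G' p := by
  intro g'
  obtain ⟨g, rfl⟩ := hf g'
  obtain ⟨h, rfl⟩ := h g
  exact ⟨f h, (map_pow f h p).symm⟩

theorem IsPRadicable.pow {G : Type*} [Group G] {p : ℕ} (h : IsPRadicable G p) (k : ℕ) :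
    IsPRadicable G (p ^ k) := by
  induction k with
  | zero => exact fun g => ⟨g, pow_one g⟩
  | succ k ih =>
    intro g
    obtain ⟨a, rfl⟩ := ih g
    obtain ⟨b, rfl⟩ := h a
    exact ⟨b, by rw [pow_succ', pow_mul]⟩

open scoped IsMulCommutative in
theorem IsPRadicable.range_of_abelianization {H G : Type*} [Group H] [Group G] {p : ℕ}
    (h : IsPRadicable (Abelianization H) p) (f : H →* G) [IsMulCommutative f.range] :
    IsPRadicable f.range p :=
  h.of_surjective_s17 (f := Abelianization.lift f.rangeRestrict) fun y => by
    obtain ⟨x, rfl⟩ := f.rangeRestrict_surjective y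
    exact ⟨Abelianization.of x, Abelianization.lift_apply_of _ _⟩

structure IsPPowFiltration {G : Type*} [Group G] (p : ℕ) (V : ℕ → Subgroup G) : Prop where
  pow_mem {k : ℕ} {g : G} : g ∈ V k → g ^ p ∈ V (k + 1)
  eq_one {g : G} : (∀ k, g ∈ V k) → g = 1

namespace IsPPowFiltration

variable {G : Type*} [Group G] {p : ℕ} {V : ℕ → Subgroup G}

theorem pow_pow_mem (hV : IsPPowFiltration p V) {g : G} (hg : g ∈ V 0) (k : ℕ) :
    g ^ p ^ k ∈ V k := by
  induction k with
  | zero => simpa using hg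
  | succ k ih => simpa [pow_succ, pow_mul] using hV.pow_mem ih

theorem eq_one_of_pow_eq_one (hV : IsPPowFiltration p V) {g : G} (hg : g ∈ V 0) {u : ℕ}
    (hu : g ^ u = 1) (hpu : p.Coprime u) : g = 1 :=
  hV.eq_one fun k => by
    obtain ⟨v, hv⟩ := exists_pow_eq_self_of_coprime
      ((hpu.coprime_dvd_right (orderOf_dvd_of_pow_eq_one hu)).pow_left k)
    exact hv ▸ (V k).pow_mem (hV.pow_pow_mem hg k) v

theorem subgroupOf (hV : IsPPowFiltration p V) (K : Subgroup G) :
    IsPPowFiltration p fun k => (V k).subgroupOf K where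
  pow_mem hg := by simpa [Subgroup.mem_subgroupOf] using hV.pow_mem hg
  eq_one hg := Subtype.ext (hV.eq_one hg)

theorem finite_of_isPRadicable [IsMulCommutative G] (hV : IsPPowFiltration p V) (hp : p.Prime)
    (hrad : IsPRadicable G p) (hV0 : (V 0).index ≠ 0) : Finite G := by
  have hexp : ∀ a : G, a ^ (V 0).index = 1 := fun a => hV.eq_one fun k => by
    obtain ⟨c, rfl⟩ := hrad.pow k a
    rw [← pow_mul, mul_comm, pow_mul]
    exact hV.pow_pow_mem ((V 0).pow_index_mem c) k
  obtain ⟨e, u, hpu, hm⟩ := Nat.exists_eq_pow_mul_and_not_dvd hV0 p hp.ne_one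
  have hu : ∀ a : G, a ^ u = 1 := fun a => by
    obtain ⟨c, rfl⟩ := hrad.pow e a
    rw [← pow_mul, ← hm, hexp]
  have hbot : V 0 = ⊥ := (Subgroup.eq_bot_iff_forall _).2 fun a ha =>
    hV.eq_one_of_pow_eq_one ha (hu a) ((Nat.Prime.coprime_iff_not_dvd hp).2 hpu)
  rw [hbot, Subgroup.index_bot] at hV0
  exact Nat.finite_of_card_ne_zero hV0

end IsPPowFiltration

theorem Subgroup.relIndex_ne_zero_of_isOpen_of_isCompact {G : Type*} [Group G]
    [TopologicalSpace G] [IsTopologicalGroup G] {U E : Subgroup G} (hU : IsOpen (U : Set G))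
    (hE : IsCompact (E : Set G)) : U.relIndex E ≠ 0 := by
  have : CompactSpace E := isCompact_iff_compactSpace.mp hE
  have : Finite (E ⧸ U.subgroupOf E) :=
    Subgroup.quotient_finite_of_isOpen _ (hU.preimage continuous_subtype_val)
  exact Subgroup.index_ne_zero_of_finite

open Polynomial in
theorem pow_sub_one_dvd_of_dvd_sub_one {S : Type*} [Ring S] (p : ℕ) {k : ℕ} (hk : 1 ≤ k) {x : S}
    (hx : (p : S) ^ k ∣ x - 1) : (p : S) ^ (k + 1) ∣ x ^ p - 1 := by
  obtain ⟨c, hc⟩ := hx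
  obtain ⟨j, rfl⟩ : ∃ j, k = j + 1 := ⟨k - 1, by omega⟩
  -- `S` need not be commutative: prove the divisibility in `ℤ[X]` and evaluate at `c`.
  have hpoly : (p : ℤ[X]) ^ (j + 2) ∣ (1 + (p : ℤ[X]) ^ (j + 1) * X) ^ p - 1 := by
    have h := sq_dvd_add_pow_sub_sub ((p : ℤ[X]) ^ (j + 1) * X) 1 p
    simp only [one_pow, one_mul] at h
    have hsq : (p : ℤ[X]) ^ (j + 2) ∣ ((p : ℤ[X]) ^ (j + 1) * X) ^ 2 :=
      ⟨(p : ℤ[X]) ^ j * X ^ 2, by ring⟩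
    have hlin : (p : ℤ[X]) ^ (j + 2) ∣ (p : ℤ[X]) ^ (j + 1) * X * (p : ℤ[X]) := ⟨X, by ring⟩
    convert dvd_add (hsq.trans h) hlin using 1
    ring
  simpa [← hc] using map_dvd (aeval c) hpoly

def congruenceSubmonoid {S : Type*} [Ring S] (a : S) : Submonoid S where
  carrier := {x | a ∣ x - 1}
  one_mem' := by simp
  mul_mem' {x y} hx hy := by
    have : x * y - 1 = (x - 1) * y + (y - 1) := by noncomm_ring
    simp only [Set.mem_ofPred_eq, this] at *
    exact dvd_add (hx.mul_right y) hy

theorem Matrix.natCast_dvd_iff {n R : Type*} [Fintype n] [DecidableEq n] [Semiring R] (a : ℕ)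
    {B : Matrix n n R} : (a : Matrix n n R) ∣ B ↔ ∀ i j, (a : R) ∣ B i j := by
  constructor
  · rintro ⟨c, rfl⟩ i j
    rw [← nsmul_eq_mul, Matrix.smul_apply, nsmul_eq_mul]
    exact dvd_mul_right _ _
  · intro h
    choose c hc using h
    refine ⟨Matrix.of c, ?_⟩
    ext i j
    rw [← nsmul_eq_mul, Matrix.smul_apply, nsmul_eq_mul, Matrix.of_apply, hc]

theorem PadicInt.eq_zero_of_forall_pow_dvd {p : ℕ} [Fact p.Prime] {y : ℤ_[p]}
    (h : ∀ k, (p : ℤ_[p]) ^ k ∣ y) : y = 0 := by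
  by_contra hy
  have := (PadicInt.mem_span_pow_iff_le_valuation y hy (y.valuation + 1)).1
    (Ideal.mem_span_singleton.2 (h _))
  omega

section PadicCongruence

open Topology

variable (p : ℕ) [Fact p.Prime] (n : ℕ)

noncomputable abbrev padicIntMatrixCoe :
    Matrix (Fin n) (Fin n) ℤ_[p] →+* Matrix (Fin n) (Fin n) ℚ_[p] :=
  (PadicInt.Coe.ringHom : ℤ_[p] →+* ℚ_[p]).mapMatrix

/-- Level `k` is congruence modulo `p ^ (k + 1)`, so that already level `0` has `p`-th powers
one level deeper (`pow_sub_one_dvd_of_dvd_sub_one` needs `1 ≤ k`). -/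
noncomputable def padicCongruenceSubgroup (k : ℕ) : Subgroup (GL (Fin n) ℚ_[p]) :=
  ((congruenceSubmonoid ((p : Matrix (Fin n) (Fin n) ℤ_[p]) ^ (k + 1))).map
    (padicIntMatrixCoe p n)).units

variable {p n}

theorem padicIntMatrixCoe_injective : Function.Injective (padicIntMatrixCoe p n) :=
  fun _ _ h => Matrix.ext fun i j => PadicInt.ext (congrFun (congrFun h i) j)

theorem pow_mem_padicCongruenceSubgroup_succ {k : ℕ} {g : GL (Fin n) ℚ_[p]}
    (hg : g ∈ padicCongruenceSubgroup p n k) : g ^ p ∈ padicCongruenceSubgroup p n (k + 1) := by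
  have key : ∀ {A}, A ∈ (congruenceSubmonoid ((p : Matrix (Fin n) (Fin n) ℤ_[p]) ^ (k + 1))).map
      (padicIntMatrixCoe p n) → A ^ p ∈ (congruenceSubmonoid
        ((p : Matrix (Fin n) (Fin n) ℤ_[p]) ^ (k + 1 + 1))).map (padicIntMatrixCoe p n) := by
    rintro _ ⟨x, hx, rfl⟩
    exact ⟨x ^ p, pow_sub_one_dvd_of_dvd_sub_one p k.succ_pos hx, map_pow _ _ _⟩
  rw [padicCongruenceSubgroup, Submonoid.mem_units_iff] at hg ⊢
  rw [Units.val_pow_eq_pow_val, ← inv_pow, Units.val_pow_eq_pow_val]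
  exact ⟨key hg.1, key hg.2⟩

theorem eq_one_of_forall_mem_padicCongruenceSubgroup {g : GL (Fin n) ℚ_[p]}
    (hg : ∀ k, g ∈ padicCongruenceSubgroup p n k) : g = 1 := by
  choose x hx hxg using fun k => (Submonoid.mem_units_iff _ g).1 (hg k) |>.1
  have hx0 : ∀ k, x k = x 0 := fun k =>
    padicIntMatrixCoe_injective ((hxg k).trans (hxg 0).symm)
  have hx1 : x 0 - 1 = 0 := by
    ext i j
    refine PadicInt.eq_zero_of_forall_pow_dvd fun k => ?_
    have := hx k
    rw [hx0, ← Nat.cast_pow] at this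
    exact (pow_dvd_pow _ k.le_succ).trans
      (by simpa using (Matrix.natCast_dvd_iff _).1 this i j)
  ext1
  rw [← hxg 0, sub_eq_zero.1 hx1, map_one, Units.val_one]

theorem padicCongruenceSubgroup_isPPowFiltration :
    IsPPowFiltration p (padicCongruenceSubgroup p n) where
  pow_mem := pow_mem_padicCongruenceSubgroup_succ
  eq_one := eq_one_of_forall_mem_padicCongruenceSubgroup

theorem congruenceSubmonoid_map_mem_nhds :
    ((congruenceSubmonoid (p : Matrix (Fin n) (Fin n) ℤ_[p])).map (padicIntMatrixCoe p n) :
      Set (Matrix (Fin n) (Fin n) ℚ_[p])) ∈ 𝓝 1 := by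
  have hball : ∀ᶠ A : Matrix (Fin n) (Fin n) ℚ_[p] in 𝓝 1, ∀ i j, ‖(A - 1) i j‖ < 1 := by
    refine Filter.eventually_all.2 fun i => Filter.eventually_all.2 fun j => ?_
    have := (continuous_id.matrix_elem i j).continuousAt.eventually
      (Metric.ball_mem_nhds ((1 : Matrix (Fin n) (Fin n) ℚ_[p]) i j) one_pos)
    simpa [dist_eq_norm] using this
  filter_upwards [hball] with A hA
  have hint : ∀ i j, ‖A i j‖ ≤ 1 := fun i j => by
    calc ‖A i j‖ = ‖(A - 1) i j + (1 : Matrix _ _ ℚ_[p]) i j‖ := by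
          rw [Matrix.sub_apply, sub_add_cancel]
      _ ≤ max ‖(A - 1) i j‖ ‖(1 : Matrix _ _ ℚ_[p]) i j‖ := IsUltrametricDist.norm_add_le_max _ _
      _ ≤ 1 := max_le (hA i j).le (by rw [Matrix.one_apply]; split_ifs <;> simp)
  set x : Matrix (Fin n) (Fin n) ℤ_[p] := Matrix.of fun i j => ⟨A i j, hint i j⟩
  have hx : padicIntMatrixCoe p n x = A := rfl
  refine ⟨x, (Matrix.natCast_dvd_iff p).2 fun i j => ?_, hx⟩
  have hx1 : ((x - 1) i j : ℚ_[p]) = (A - 1) i j := by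
    rw [← hx, ← map_one (padicIntMatrixCoe p n), ← map_sub]; rfl
  rw [← PadicInt.norm_lt_one_iff_dvd, PadicInt.norm_def, hx1]
  exact hA i j

theorem isOpen_padicCongruenceSubgroup_zero :
    IsOpen (padicCongruenceSubgroup p n 0 : Set (GL (Fin n) ℚ_[p])) := by
  refine Subgroup.isOpen_of_mem_nhds (g := 1) _ ?_
  have hval := Units.continuous_val.continuousAt (x := (1 : GL (Fin n) ℚ_[p])).preimage_mem_nhds
    (by rw [Units.val_one]; exact congruenceSubmonoid_map_mem_nhds)
  have hinv := (Units.continuous_coe_inv.continuousAt (x := (1 : GL (Fin n) ℚ_[p]))).preimage_mem_nhds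
    (by rw [inv_one, Units.val_one]; exact congruenceSubmonoid_map_mem_nhds)
  filter_upwards [hval, hinv] with g h1 h2
  rw [SetLike.mem_coe, padicCongruenceSubgroup, Submonoid.mem_units_iff]
  simpa using And.intro h1 h2

end PadicCongruence

theorem stmt17_general (p : ℕ) [Fact p.Prime] (n : ℕ)
    (C : Subgroup (GL (Fin n) ℚ_[p]))
    (hCcomm : ∀ a ∈ C, ∀ b ∈ C, a * b = b * a)
    (E : Subgroup (GL (Fin n) ℚ_[p])) (hEC : E ≤ C)
    (hEcpt : IsCompact (E : Set (GL (Fin n) ℚ_[p])))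
    (Γ : Type*) [Group Γ]
    (H : Subgroup Γ)
    (hrad : IsPRadicable (Abelianization H) p)
    (f : H →* GL (Fin n) ℚ_[p]) (hfE : ∀ x : H, f x ∈ E) :
    (Set.range f).Finite := by
  have hrange : f.range ≤ E := by rintro _ ⟨x, rfl⟩; exact hfE x
  have : IsMulCommutative f.range :=
    ⟨⟨fun a b => Subtype.ext (hCcomm _ (hEC (hrange a.2)) _ (hEC (hrange b.2)))⟩⟩
  have hindex : (padicCongruenceSubgroup p n 0).relIndex f.range ≠ 0 :=
    mt (Subgroup.relIndex_eq_zero_of_le_right hrange)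
      (Subgroup.relIndex_ne_zero_of_isOpen_of_isCompact isOpen_padicCongruenceSubgroup_zero hEcpt)
  have : Finite f.range :=
    (padicCongruenceSubgroup_isPPowFiltration.subgroupOf f.range).finite_of_isPRadicable
      Fact.out (hrad.range_of_abelianization f) hindex
  rw [← f.coe_range]
  exact Set.toFinite _

/-- let `C` be a torus over `ℚ_p` (a commutative subgroup of
`GL n ℚ_p` that is simultaneously diagonalizable over the algebraic closure),
and let `E` be the maximal compact subgroup of its group of points.  If `Γ` is a
nilpotent group of finite Hirsch rank and `H` is a finite-index subgroup whose
abelianization is `p`-radicable, then every homomorphism from `H` to `E` has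
finite image. -/
theorem stmt17 (p : ℕ) [Fact p.Prime] (n : ℕ)
    (C : Subgroup (GL (Fin n) ℚ_[p]))
    (hCcomm : ∀ a ∈ C, ∀ b ∈ C, a * b = b * a)
    (hCdiag : ∃ h : GL (Fin n) (AlgebraicClosure ℚ_[p]), ∀ c ∈ C,
      ∃ d : Fin n → (AlgebraicClosure ℚ_[p])ˣ,
        ((h * glMapAC p c * h⁻¹ : GL (Fin n) (AlgebraicClosure ℚ_[p])) :
          Matrix (Fin n) (Fin n) (AlgebraicClosure ℚ_[p])) =
          Matrix.diagonal fun i => (d i : AlgebraicClosure ℚ_[p]))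
    (E : Subgroup (GL (Fin n) ℚ_[p])) (hEC : E ≤ C)
    (hEcpt : IsCompact (E : Set (GL (Fin n) ℚ_[p])))
    (hEmax : ∀ K : Subgroup (GL (Fin n) ℚ_[p]),
      K ≤ C → IsCompact (K : Set (GL (Fin n) ℚ_[p])) → K ≤ E)
    (Γ : Type*) [Group Γ] [Group.IsNilpotent Γ] (hΓrank : hirschRank Γ ≠ ⊤)
    (H : Subgroup Γ) (hHfi : H.index ≠ 0)
    (hrad : IsPRadicable (Abelianization H) p)
    (f : H →* GL (Fin n) ℚ_[p]) (hfE : ∀ x : H, f x ∈ E) :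
    (Set.range f).Finite :=
  stmt17_general p n C hCcomm E hEC hEcpt Γ H hrad f hfE
end

section
/- If S is a nonempty finite set of primes and U is a unipotent algebraic group over ℚ, then any S-arithmetic subgroup Γ of U (a subgroup commensurable with U(ℤ[1/S])) has no infinite cyclic quotient: every group homomorphism Γ → ℤ is trivial. -/
open Matrix

/-- The Zariski topology on `σ → k`: generated by complements of hypersurfaces. -/
def zariskiTop (σ k : Type*) [CommSemiring k] : TopologicalSpace (σ → k) :=
  .generateFrom {U | ∃ f : MvPolynomial σ k, U = {x | MvPolynomial.eval x f ≠ 0}}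

/-- View a square matrix as a function on pairs of indices. -/
def matFun {n : ℕ} {k : Type*} (A : Matrix (Fin n) (Fin n) k) : Fin n × Fin n → k :=
  fun q => A q.1 q.2

/-- The Zariski topology on `n × n` matrices. -/
def zariskiMat (n : ℕ) (k : Type*) [CommSemiring k] :
    TopologicalSpace (Matrix (Fin n) (Fin n) k) :=
  TopologicalSpace.induced matFun (zariskiTop (Fin n × Fin n) k)

/-- The set of matrices underlying a subgroup of `GL n k`. -/
def subgroupMatSet {n : ℕ} {k : Type*} [CommRing k] (Γ : Subgroup (GL (Fin n) k)) :
    Set (Matrix (Fin n) (Fin n) k) :=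
  (fun g : GL (Fin n) k => (g : Matrix (Fin n) (Fin n) k)) '' (Γ : Set (GL (Fin n) k))

/-- Zariski closure of a set of matrices. -/
noncomputable def matClosure {n : ℕ} {k : Type*} [CommSemiring k]
    (s : Set (Matrix (Fin n) (Fin n) k)) : Set (Matrix (Fin n) (Fin n) k) :=
  letI := zariskiMat n k
  closure s

/-- The ring `ℤ[1/S]` of `S`-integers, as a subring of `ℚ`. -/
def sIntegers (S : Finset ℕ) : Subring ℚ :=
  Subring.closure {x : ℚ | ∃ q ∈ S, x = (q : ℚ)⁻¹}

/-!
Fix a prime `q ∈ S` and `y ∈ Γ ∩ Λ`, so that `N = y - 1` is nilpotent. The binomial series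
turns `t ↦ (1 + N) ^ t` into a one-parameter subgroup of `GL n ℚ` whose entries are polynomial
in `t`. It lies in `U`: its integer points `y ^ m` are Zariski dense in it and `U` is Zariski
closed. For `t ∈ ℤ[1/q]` its entries are `S`-integral, since the binomial coefficients of
elements of `ℤ[1/q]` lie in `ℤ[1/q]`. So the root `w = y ^ (1 / q ^ k)` lies in `Λ`, hence
`w ^ M! ∈ Γ` with `M = [Λ : Γ ∩ Λ]`, and `f (y ^ M!) = q ^ k • f (w ^ M!)` for every `k`. This
forces `f y = 0`. As `Γ ∩ Λ` has finite index in `Γ` and `ℤ` is torsion-free, `f = 0`.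
-/

open Finset Nat Polynomial Topology

theorem Ring.prod_range_sub_eq_factorial_mul_choose {R : Type*} [CommRing R] [BinomialRing R]
    (r : R) (i : ℕ) : ∏ j ∈ range i, (r - j) = i ! * Ring.choose r i := by
  rw [← descPochhammer_eval_eq_prod_range, ← nsmul_eq_mul,
    ← Ring.descPochhammer_eq_factorial_smul_choose, ← aeval_eq_smeval, aeval_def, ← eval_map,
    descPochhammer_map]

theorem Int.dvd_prod_range_sub_mul {m i : ℕ} (hm : m ∣ i !) {Q : ℤ} (hQ : IsCoprime (m : ℤ) Q)
    (a : ℤ) : (m : ℤ) ∣ ∏ j ∈ Finset.range i, (a - j * Q) := by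
  obtain ⟨u, c, huc⟩ := hQ
  have hcQ : (c : ZMod m) * Q = 1 := by
    simpa using
      congrArg (Int.cast : ℤ → ZMod m) (show c * Q = 1 - u * m by linear_combination huc)
  -- `c` inverts `Q` modulo `m`, turning the product into `∏ (c a - j) = i! * choose (c a) i`
  have hc : ∏ j ∈ Finset.range i, ((c : ZMod m) * (a - j * Q)) = 0 := by
    have hprod : ∏ j ∈ Finset.range i, ((c : ZMod m) * (a - j * Q)) =
        ((∏ j ∈ Finset.range i, (c * a - j) : ℤ) : ZMod m) := by
      push_cast
      exact Finset.prod_congr rfl fun j _ => by linear_combination (-(j : ZMod m)) * hcQ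
    rw [hprod, Ring.prod_range_sub_eq_factorial_mul_choose, Int.cast_mul,
      (ZMod.intCast_zmod_eq_zero_iff_dvd _ m).mpr (mod_cast hm), zero_mul]
  rw [← ZMod.intCast_zmod_eq_zero_iff_dvd]
  push_cast
  calc _ = (Q : ZMod m) ^ i * ∏ j ∈ Finset.range i, ((c : ZMod m) * (a - j * Q)) := by
        rw [Finset.prod_mul_distrib, Finset.prod_const, Finset.card_range, ← mul_assoc,
          ← mul_pow, mul_comm (Q : ZMod m), hcQ, one_pow, one_mul]
    _ = 0 := by rw [hc, mul_zero]

theorem mem_sIntegers_of_pow_mul_eq {S : Finset ℕ} {q : ℕ} (hqS : q ∈ S) (hq : q ≠ 0) {x : ℚ}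
    {e : ℕ} {d : ℤ} (h : (q : ℚ) ^ e * x = d) : x ∈ sIntegers S := by
  have hqinv : (q : ℚ)⁻¹ ∈ sIntegers S := Subring.subset_closure ⟨q, hqS, rfl⟩
  have hx : x = d * (q : ℚ)⁻¹ ^ e := by
    rw [← h, inv_pow]; field_simp
  rw [hx]
  exact mul_mem (intCast_mem _ d) (pow_mem hqinv e)

theorem choose_mem_sIntegers {S : Finset ℕ} {q : ℕ} (hqS : q ∈ S) (hq : q.Prime) {x : ℚ}
    {k : ℕ} {a : ℤ} (hx : (q : ℚ) ^ k * x = a) (i : ℕ) : Ring.choose x i ∈ sIntegers S := by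
  set α := (i !).factorization q
  set β := i ! / q ^ α
  -- `β`, the part of `i!` prime to `q`, divides `q ^ (k * i) * i! * choose x i ∈ ℤ`
  have hfac : q ^ α * β = i ! := Nat.ordProj_mul_ordCompl_eq_self _ _
  have hβ : (β : ℚ) ≠ 0 := by
    exact_mod_cast (Nat.ordCompl_pos q (factorial_ne_zero i)).ne'
  have hcop : IsCoprime (β : ℤ) ((q : ℤ) ^ k) := by
    exact_mod_cast Nat.isCoprime_iff_coprime.mpr
      ((Nat.coprime_ordCompl hq (factorial_ne_zero i)).symm.pow_right k)
  obtain ⟨d, hd⟩ := Int.dvd_prod_range_sub_mul (Dvd.intro_left _ hfac) hcop a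
  refine mem_sIntegers_of_pow_mul_eq hqS hq.ne_zero (e := k * i + α) (d := d)
    (mul_left_cancel₀ hβ ?_)
  calc (β : ℚ) * ((q : ℚ) ^ (k * i + α) * Ring.choose x i)
      = ((q : ℚ) ^ k) ^ i * ∏ j ∈ range i, (x - j) := by
        rw [Ring.prod_range_sub_eq_factorial_mul_choose, ← hfac]; push_cast; ring
    _ = ∏ j ∈ range i, ((q : ℚ) ^ k * (x - j)) := by
        rw [prod_mul_distrib, prod_const, card_range]
    _ = ∏ j ∈ range i, ((a : ℚ) - j * (q : ℚ) ^ k) :=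
        prod_congr rfl fun j _ => by rw [← hx]; ring
    _ = β * d := by exact_mod_cast hd

namespace PowerSeries
variable {R A : Type*} [CommRing R] [Ring A] [Algebra R A] {n : ℕ} {N : A}

theorem aeval_trunc_coe (hN : N ^ n = 0) (p : R[X]) :
    Polynomial.aeval N (trunc n (p : R⟦X⟧)) = Polynomial.aeval N p := by
  obtain ⟨r, hr⟩ : (Polynomial.X : R[X]) ^ n ∣ p - trunc n (p : R⟦X⟧) := by
    refine Polynomial.X_pow_dvd_iff.mpr fun d hd => ?_
    simp [coeff_trunc, hd]
  rw [eq_comm, ← sub_eq_zero, ← map_sub, hr, map_mul, map_pow, aeval_X, hN, zero_mul]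

noncomputable def aevalOfPowEqZero (hN : N ^ n = 0) : R⟦X⟧ →ₐ[R] A where
  toFun f := Polynomial.aeval N (trunc n f)
  map_one' := by simpa using aeval_trunc_coe hN 1
  map_mul' f g := by
    rw [← trunc_trunc_mul_trunc, ← Polynomial.coe_mul, aeval_trunc_coe hN, map_mul]
  map_zero' := by simp
  map_add' f g := by simp
  commutes' r := by simpa using aeval_trunc_coe hN (Polynomial.C r)

theorem aevalOfPowEqZero_apply (hN : N ^ n = 0) (f : R⟦X⟧) :
    aevalOfPowEqZero hN f = ∑ i ∈ range n, coeff i f • N ^ i := by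
  simp [aevalOfPowEqZero, aeval_def, eval₂_trunc_eq_sum_range, Algebra.smul_def]

theorem aevalOfPowEqZero_coe (hN : N ^ n = 0) (p : R[X]) :
    aevalOfPowEqZero hN (p : R⟦X⟧) = Polynomial.aeval N p :=
  aeval_trunc_coe hN p

@[simp]
theorem aevalOfPowEqZero_X (hN : N ^ n = 0) : aevalOfPowEqZero hN (X : R⟦X⟧) = N := by
  rw [← Polynomial.coe_X, aevalOfPowEqZero_coe, aeval_X]

end PowerSeries

section BinomialPow

open PowerSeries

variable {R A : Type*} [CommRing R] [BinomialRing R] [Ring A] [Algebra R A] {n : ℕ} {N : A}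

/-- `t ↦ (1 + N) ^ t`, given by the binomial series, which terminates since `N ^ n = 0`. -/
noncomputable def binomialPowHom (hN : N ^ n = 0) : Multiplicative R →* Aˣ where
  toFun t :=
    { val := aevalOfPowEqZero hN (binomialSeries R t.toAdd)
      inv := aevalOfPowEqZero hN (binomialSeries R (-t.toAdd))
      val_inv := by simp [← map_mul, ← binomialSeries_add]
      inv_val := by simp [← map_mul, ← binomialSeries_add] }
  map_one' := Units.ext (by simp)
  map_mul' s t := Units.ext (by simp)

theorem coe_binomialPowHom (hN : N ^ n = 0) (t : R) :
    (binomialPowHom hN (.ofAdd t) : A) = ∑ i ∈ range n, Ring.choose t i • N ^ i := by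
  simp [binomialPowHom, aevalOfPowEqZero_apply]

theorem coe_binomialPowHom_natCast (hN : N ^ n = 0) (d : ℕ) :
    (binomialPowHom hN (.ofAdd (d : R)) : A) = (1 + N) ^ d := by
  simp [binomialPowHom]

theorem binomialPowHom_natCast {y : Aˣ} (hN : ((y : A) - 1) ^ n = 0) (d : ℕ) :
    binomialPowHom hN (.ofAdd (d : R)) = y ^ d :=
  Units.ext (by simp [coe_binomialPowHom_natCast])

theorem binomialPowHom_pow_eq {y : Aˣ} (hN : ((y : A) - 1) ^ n = 0) {t : R} {m d : ℕ}
    (h : m * t = d) : binomialPowHom hN (.ofAdd t) ^ m = y ^ d := by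
  rw [← map_pow, ← ofAdd_nsmul, nsmul_eq_mul, h, binomialPowHom_natCast]

end BinomialPow

theorem Polynomial.eval_mvPolynomial_aeval {σ K : Type*} [CommRing K] (g : σ → K[X])
    (F : MvPolynomial σ K) (u : K) :
    (MvPolynomial.aeval g F).eval u = MvPolynomial.eval (fun s => (g s).eval u) F := by
  simpa [Polynomial.coe_aeval_eq_eval, MvPolynomial.coe_aeval_eq_eval] using
    congrArg (· F) (MvPolynomial.comp_aeval g (Polynomial.aeval u))

theorem continuous_eval_cofinite_zariskiTop {σ K : Type*} [CommRing K] [IsDomain K] (g : σ → K[X]) :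
    Continuous[.cofinite, zariskiTop σ K] fun u s => (g s).eval u := by
  refine continuous_generateFrom_iff.mpr ?_
  rintro _ ⟨F, rfl⟩ ⟨u, hu⟩
  have hp : MvPolynomial.aeval g F ≠ 0 := by
    rintro h
    apply hu
    simp [← Polynomial.eval_mvPolynomial_aeval, h]
  refine (Polynomial.finite_setOfPred_isRoot hp).subset fun v hv => ?_
  simpa [Polynomial.eval_mvPolynomial_aeval] using hv

theorem closure_cofinite_eq_univ {X : Type*} {s : Set X} (hs : s.Infinite) :
    closure[.cofinite] s = Set.univ := by
  by_contra h
  have hopen : (closure[.cofinite] s)ᶜ.Nonempty → (closure[.cofinite] s)ᶜᶜ.Finite :=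
    (@isClosed_closure X .cofinite s).isOpen_compl
  rw [compl_compl] at hopen
  exact hs ((hopen (Set.nonempty_compl.mpr h)).subset (@subset_closure X .cofinite s))

theorem binomialPowHom_mem_of_closed {n : ℕ} {U : Subgroup (GL (Fin n) ℚ)}
    (hclosed : matClosure (subgroupMatSet U) = subgroupMatSet U) {y : GL (Fin n) ℚ} (hy : y ∈ U)
    (hN : ((y : Matrix (Fin n) (Fin n) ℚ) - 1) ^ n = 0) (t : ℚ) :
    binomialPowHom hN (.ofAdd t) ∈ U := by
  set N := (y : Matrix (Fin n) (Fin n) ℚ) - 1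
  let g : Fin n × Fin n → ℚ[X] := fun s =>
    ∑ l ∈ range n, C ((N ^ l) s.1 s.2) * Ring.choose (X : ℚ[X]) l
  have hg : ∀ u : ℚ, matFun (binomialPowHom hN (.ofAdd u) : Matrix (Fin n) (Fin n) ℚ) =
      fun s => (g s).eval u := by
    intro u
    funext s
    simp only [g, matFun, coe_binomialPowHom, Matrix.sum_apply, Matrix.smul_apply, smul_eq_mul,
      eval_finsetSum, eval_mul, eval_C]
    refine sum_congr rfl fun l _ => ?_
    rw [mul_comm, ← coe_evalRingHom, Ring.map_choose, coe_evalRingHom, eval_X]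
  have hcont : Continuous[.cofinite, zariskiMat n ℚ]
      fun u : ℚ => (binomialPowHom hN (.ofAdd u) : Matrix (Fin n) (Fin n) ℚ) :=
    continuous_induced_rng.mpr
      (by simpa [Function.comp_def, hg] using continuous_eval_cofinite_zariskiTop g)
  have hmem : (binomialPowHom hN (.ofAdd t) : Matrix (Fin n) (Fin n) ℚ) ∈ subgroupMatSet U := by
    -- `ℕ` is dense in the cofinite topology, and `(1 + N) ^ m = y ^ m ∈ U`
    rw [← hclosed, matClosure]
    refine @map_mem_closure ℚ _ .cofinite (zariskiMat n ℚ) _ (Set.range ((↑) : ℕ → ℚ)) _ _ hcont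
      ?_ ?_
    · rw [closure_cofinite_eq_univ (Set.infinite_range_of_injective Nat.cast_injective)]
      trivial
    · rintro _ ⟨m, rfl⟩
      exact ⟨y ^ m, pow_mem hy m, congrArg Units.val (binomialPowHom_natCast hN m).symm⟩
  obtain ⟨g, hgU, hg⟩ := hmem
  rwa [← Units.ext hg]

theorem coe_binomialPowHom_mem_matrix {ι R : Type*} [Fintype ι] [DecidableEq ι] [CommRing R]
    [BinomialRing R] {T : Subring R} {n : ℕ} {N : Matrix ι ι R} (hN : N ^ n = 0)
    (hNT : N ∈ T.matrix) {t : R} (ht : ∀ i, Ring.choose t i ∈ T) :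
    (binomialPowHom hN (.ofAdd t) : Matrix ι ι R) ∈ T.matrix := by
  rw [coe_binomialPowHom]
  refine sum_mem fun i _ a b => ?_
  rw [Matrix.smul_apply, smul_eq_mul]
  exact T.mul_mem (ht i) (pow_mem hNT i a b)

theorem Int.eq_zero_of_forall_pow_dvd {q : ℕ} (hq : 1 < q) {a : ℤ}
    (h : ∀ k : ℕ, (q : ℤ) ^ k ∣ a) : a = 0 :=
  Int.eq_zero_of_dvd_of_natAbs_lt_natAbs (h a.natAbs)
    (by simpa [Int.natAbs_pow] using Nat.lt_pow_self hq)

theorem Subgroup.pow_factorial_relIndex_mem {G : Type*} [Group G] {H K : Subgroup G}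
    (h : H.relIndex K ≠ 0) {a : G} (ha : a ∈ K) : a ^ (H.relIndex K)! ∈ H :=
  (pow_mem_of_relIndex_ne_zero_of_dvd h ha fun _ hm hle => Nat.dvd_factorial hm hle).1

theorem MonoidHom.apply_eq_one_of_index_ne_zero {G M : Type*} [Group G] [Monoid M]
    [IsMulTorsionFree M] (f : G →* M) {H : Subgroup G} (hH : H.index ≠ 0)
    (hf : ∀ x ∈ H, f x = 1) (x : G) : f x = 1 := by
  obtain ⟨d, hd, -, hxd⟩ := Subgroup.exists_pow_mem_of_index_ne_zero hH x
  rw [← pow_eq_one_iff_left hd.ne', ← map_pow]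
  exact hf _ hxd

theorem MonoidHom.apply_eq_one_of_forall_exists_pow_eq {G : Type*} [Group G]
    (f : G →* Multiplicative ℤ) {q c : ℕ} (hq : 1 < q) (hc : c ≠ 0) {y : G}
    (h : ∀ k, ∃ z, z ^ q ^ k = y ^ c) : f y = 1 := by
  have hdvd : ∀ k : ℕ, (q : ℤ) ^ k ∣ c * (f y).toAdd := by
    intro k
    obtain ⟨z, hz⟩ := h k
    have hfz := congrArg (fun g => (f g).toAdd) hz
    simp only [map_pow] at hfz
    rw [_root_.toAdd_pow, _root_.toAdd_pow, nsmul_eq_mul, nsmul_eq_mul] at hfz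
    exact ⟨(f z).toAdd, by rw [← hfz]; push_cast; ring⟩
  have hcb := Int.eq_zero_of_forall_pow_dvd hq hdvd
  exact toAdd_eq_zero.mp ((mul_eq_zero.mp hcb).resolve_left (mod_cast hc))

/-- let `S` be a nonempty finite set of primes, `U` a unipotent
algebraic group over `ℚ` (a Zariski-closed group of unipotent matrices in
`GL n ℚ`), `Λ = U(ℤ[1/S])` its group of `S`-integral points, and `Γ ≤ U` a
subgroup commensurable with `Λ`.  Then every homomorphism `Γ → ℤ` is trivial. -/
theorem stmt18 (S : Finset ℕ) (hS : ∀ q ∈ S, q.Prime) (hSne : S.Nonempty)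
    (n : ℕ) (U Λ Γ : Subgroup (GL (Fin n) ℚ))
    (hunip : ∀ g ∈ U, ((g : Matrix (Fin n) (Fin n) ℚ) - 1) ^ n = 0)
    (hclosed : matClosure (subgroupMatSet U) = subgroupMatSet U)
    (hΛ : ∀ g : GL (Fin n) ℚ, g ∈ Λ ↔ g ∈ U ∧
      (∀ i j, (g : Matrix (Fin n) (Fin n) ℚ) i j ∈ sIntegers S) ∧
      (∀ i j, ((g⁻¹ : GL (Fin n) ℚ) : Matrix (Fin n) (Fin n) ℚ) i j ∈ sIntegers S))
    (hΓU : Γ ≤ U) (hcomm : Subgroup.Commensurable Γ Λ) :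
    ∀ f : Γ →* Multiplicative ℤ, ∀ x : Γ, f x = 1 := by
  intro f
  obtain ⟨q, hqS⟩ := hSne
  have hq := hS q hqS
  refine f.apply_eq_one_of_index_ne_zero (H := Λ.subgroupOf Γ) hcomm.2 fun y hyΛ => ?_
  rw [Subgroup.mem_subgroupOf] at hyΛ
  have hyU := hΓU y.2
  have hN := hunip _ hyU
  have hNS : ((y : GL (Fin n) ℚ) : Matrix (Fin n) (Fin n) ℚ) - 1 ∈ (sIntegers S).matrix :=
    sub_mem ((hΛ _).1 hyΛ).2.1 (one_mem _)
  have hqk (k : ℕ) : (q : ℚ) ^ k * ((q : ℚ) ^ k)⁻¹ = 1 :=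
    mul_inv_cancel₀ (pow_ne_zero _ (mod_cast hq.ne_zero))
  have hroot (k : ℕ) : binomialPowHom hN (.ofAdd ((q : ℚ) ^ k)⁻¹) ∈ Λ := by
    refine (hΛ _).2 ⟨binomialPowHom_mem_of_closed hclosed hyU hN _,
      coe_binomialPowHom_mem_matrix hN hNS
        (choose_mem_sIntegers hqS hq (a := 1) (by simpa using hqk k)), ?_⟩
    rw [← map_inv, ← ofAdd_neg]
    exact coe_binomialPowHom_mem_matrix hN hNS
      (choose_mem_sIntegers hqS hq (a := -1) (by simpa using hqk k))
  refine f.apply_eq_one_of_forall_exists_pow_eq hq.one_lt (factorial_ne_zero (Γ.relIndex Λ))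
    fun k => ⟨⟨_, Subgroup.pow_factorial_relIndex_mem hcomm.1 (hroot k)⟩, Subtype.ext ?_⟩
  rw [SubgroupClass.coe_pow, SubgroupClass.coe_pow, ← pow_mul, mul_comm, pow_mul,
    binomialPowHom_pow_eq hN (d := 1) (by push_cast; exact hqk k), pow_one]
end
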